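/- For a symmetric positive semidefinite matrix S with eigenvalues λ_1 ≥ ... ≥ λ_n and corresponding orthonormal eigenvectors w_1, ..., w_n, the subspace spanned by the first r eigenvectors maximizes the trace of W^T S W over all n×r matrices W with orthonormal columns, and the maximum equals λ_1 + ... + λ_r. -/

import Mathlib

/-!
Write `S = Pᵀ D P` with `P` the orthogonal matrix whose rows are the eigenvectors and
`D = diag λ`. For `W` with orthonormal columns, `M = P W` again has orthonormal columns and
`tr (Wᵀ S W) = tr (Mᵀ D M) = ∑ᵢ λᵢ cᵢ`, where `cᵢ = (M Mᵀ)ᵢᵢ`. Since `M Mᵀ` is an orthogonal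
projection of rank `r`, the weights satisfy `0 ≤ cᵢ ≤ 1` and `∑ᵢ cᵢ = r`, and for decreasing
`λ` such a weighted sum is largest when the weight sits on the first `r` indices.
-/

open Matrix Finset

theorem sum_mul_le_sum_of_threshold {ι : Type*} [Fintype ι] (s : Finset ι) {lam c : ι → ℝ}
    {t : ℝ} (hs : ∀ i ∈ s, t ≤ lam i) (hsc : ∀ i ∉ s, lam i ≤ t) (hc0 : ∀ i, 0 ≤ c i)
    (hc1 : ∀ i, c i ≤ 1) (hsum : ∑ i, c i = #s) :
    ∑ i, lam i * c i ≤ ∑ i ∈ s, lam i := by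
  classical
  -- with `d` the indicator of `s`, the difference is `∑ (λᵢ - t)(dᵢ - cᵢ)`, termwise `≥ 0`
  set d : ι → ℝ := fun i => if i ∈ s then 1 else 0
  have hd : ∑ i ∈ s, lam i = ∑ i, lam i * d i := by simp [d]
  have hdsum : ∑ i, d i = #s := by simp [d]
  have hterm : ∀ i, 0 ≤ (lam i - t) * (d i - c i) := by
    intro i
    by_cases hi : i ∈ s
    · simpa [d, hi] using mul_nonneg (sub_nonneg.2 (hs i hi)) (sub_nonneg.2 (hc1 i))
    · simpa [d, hi] using
        mul_nonneg_of_nonpos_of_nonpos (sub_nonpos.2 (hsc i hi)) (neg_nonpos.2 (hc0 i))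
  have hsplit : ∑ i, lam i * d i - ∑ i, lam i * c i
      = ∑ i, (lam i - t) * (d i - c i) + t * (∑ i, d i - ∑ i, c i) := by
    simp only [mul_sub, Finset.mul_sum, ← Finset.sum_sub_distrib, ← Finset.sum_add_distrib]
    exact Finset.sum_congr rfl fun i _ => by ring
  rw [hdsum, hsum, sub_self, mul_zero, add_zero] at hsplit
  rw [hd]
  linarith [Finset.sum_nonneg fun i (_ : i ∈ univ) => hterm i]

theorem Antitone.exists_threshold {n r : ℕ} {lam : Fin n → ℝ} (hlam : Antitone lam)
    (hr : r ≤ n) : ∃ t, (∀ i : Fin n, (i : ℕ) < r → t ≤ lam i) ∧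
      ∀ i : Fin n, r ≤ (i : ℕ) → lam i ≤ t := by
  rcases hr.lt_or_eq with hlt | rfl
  · exact ⟨lam ⟨r, hlt⟩, fun i hi => hlam (Fin.le_def.2 hi.le),
      fun i hi => hlam (Fin.le_def.2 hi)⟩
  · obtain ⟨t, ht⟩ := (Set.finite_range lam).bddBelow
    exact ⟨t, fun i _ => ht ⟨i, rfl⟩, fun i hi => absurd i.isLt hi.not_gt⟩

theorem Antitone.sum_mul_le_sum_castLE {n r : ℕ} (hr : r ≤ n) {lam c : Fin n → ℝ}
    (hlam : Antitone lam) (hc0 : ∀ i, 0 ≤ c i) (hc1 : ∀ i, c i ≤ 1) (hsum : ∑ i, c i = r) :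
    ∑ i, lam i * c i ≤ ∑ i : Fin r, lam (Fin.castLE hr i) := by
  obtain ⟨t, hlt, hge⟩ := hlam.exists_threshold hr
  have hmem : ∀ i, i ∈ univ.map (Fin.castLEEmb hr) ↔ (i : ℕ) < r := by
    intro i
    simp only [Finset.mem_map, mem_univ, true_and, Fin.coe_castLEEmb]
    exact ⟨fun ⟨a, ha⟩ => ha ▸ a.isLt, fun hi => ⟨⟨i, hi⟩, rfl⟩⟩
  have := sum_mul_le_sum_of_threshold (univ.map (Fin.castLEEmb hr)) (lam := lam)
    (fun i hi => hlt i ((hmem i).1 hi)) (fun i hi => hge i (not_lt.1 (mt (hmem i).2 hi))) hc0 hc1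
    (by simpa using hsum)
  simpa using this

namespace Matrix

variable {m k R : Type*} [Fintype m]

theorem of_mul_transpose_eq_one_of_orthonormal [CommSemiring R] [DecidableEq k] {v : k → m → R}
    (hv : ∀ i j, v i ⬝ᵥ v j = if i = j then 1 else 0) : of v * (of v)ᵀ = 1 := by
  ext i j
  simpa [mul_apply, one_apply, dotProduct] using hv i j

variable [Fintype k]

theorem mul_transpose_of_eq_transpose_of_mul_diagonal [CommSemiring R] [DecidableEq k]
    {S : Matrix m m R} {v : k → m → R} {μ : k → R} (hv : ∀ i, S *ᵥ v i = μ i • v i) :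
    S * (of v)ᵀ = (of v)ᵀ * diagonal μ := by
  ext a b
  rw [mul_diagonal]
  simpa [mul_apply, mulVec, dotProduct, mul_comm] using congrFun (hv b) a

theorem trace_transpose_mul_diagonal_mul [CommSemiring R] [DecidableEq m] (M : Matrix m k R)
    (d : m → R) : (Mᵀ * diagonal d * M).trace = ∑ i, d i * (M * Mᵀ) i i := by
  rw [trace_mul_comm, ← Matrix.mul_assoc]
  simp [trace, mul_comm]

theorem sum_diag_mul_transpose_of_transpose_mul_self_eq_one [CommSemiring R] [DecidableEq k]
    {M : Matrix m k R} (hM : Mᵀ * M = 1) : ∑ i, (M * Mᵀ) i i = Fintype.card k := by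
  change (M * Mᵀ).trace = _
  rw [trace_mul_comm, hM, trace_one]

theorem diag_mul_transpose_nonneg (M : Matrix m k ℝ) (i : m) : 0 ≤ (M * Mᵀ) i i := by
  simpa using (posSemidef_self_mul_conjTranspose M).diag_nonneg (i := i)

theorem diag_mul_transpose_le_one_of_transpose_mul_self_eq_one [DecidableEq m] [DecidableEq k]
    {M : Matrix m k ℝ} (hM : Mᵀ * M = 1) (i : m) : (M * Mᵀ) i i ≤ 1 := by
  -- `1 - M Mᵀ` is a symmetric idempotent, hence positive semidefinite
  set Q := 1 - M * Mᵀ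
  have hQ : Q = Qᴴ * Q := by
    simp only [Q, conjTranspose_eq_transpose_of_trivial, transpose_sub, transpose_one,
      transpose_mul, transpose_transpose, Matrix.sub_mul, Matrix.mul_sub, Matrix.one_mul,
      Matrix.mul_one]
    rw [Matrix.mul_assoc, ← Matrix.mul_assoc Mᵀ, hM, Matrix.one_mul]
    abel
  have hpsd : Q.PosSemidef := by
    rw [hQ]
    exact posSemidef_conjTranspose_mul_self Q
  simpa [Q] using hpsd.diag_nonneg (i := i)

theorem trace_transpose_mul_diagonal_mul_le_sum_castLE {n r : ℕ} (hr : r ≤ n)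
    {d : Fin n → ℝ} (hd : Antitone d) {M : Matrix (Fin n) (Fin r) ℝ} (hM : Mᵀ * M = 1) :
    (Mᵀ * diagonal d * M).trace ≤ ∑ i : Fin r, d (Fin.castLE hr i) := by
  rw [trace_transpose_mul_diagonal_mul]
  refine hd.sum_mul_le_sum_castLE hr (diag_mul_transpose_nonneg M)
    (diag_mul_transpose_le_one_of_transpose_mul_self_eq_one hM) ?_
  simpa using sum_diag_mul_transpose_of_transpose_mul_self_eq_one hM

end Matrix

theorem pca_trace_maximization_general {n r : ℕ} (hr : r ≤ n)
    (S : Matrix (Fin n) (Fin n) ℝ)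
    (lam : Fin n → ℝ) (hsort : Antitone lam)
    (w : Fin n → (Fin n → ℝ))
    (heig : ∀ i, S.mulVec (w i) = lam i • w i)
    (horth : ∀ i j, dotProduct (w i) (w j) = if i = j then (1 : ℝ) else 0) :
    (∀ W : Matrix (Fin n) (Fin r) ℝ, Wᵀ * W = 1 →
        (Wᵀ * S * W).trace ≤ ∑ i : Fin r, lam (Fin.castLE hr i)) ∧
    (let W₀ : Matrix (Fin n) (Fin r) ℝ := fun i j => w (Fin.castLE hr j) i
     W₀ᵀ * W₀ = 1 ∧ (W₀ᵀ * S * W₀).trace = ∑ i : Fin r, lam (Fin.castLE hr i)) := by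
  refine ⟨fun W hW => ?_, ?_⟩
  · set P := of w
    have hPTP : Pᵀ * P = 1 := mul_eq_one_comm.mp (of_mul_transpose_eq_one_of_orthonormal horth)
    have hSdiag : S = Pᵀ * diagonal lam * P := by
      rw [← mul_transpose_of_eq_transpose_of_mul_diagonal heig, Matrix.mul_assoc, hPTP,
        Matrix.mul_one]
    have hPW : (P * W)ᵀ * (P * W) = 1 := by
      rw [transpose_mul, Matrix.mul_assoc, ← Matrix.mul_assoc Pᵀ, hPTP, Matrix.one_mul, hW]
    calc (Wᵀ * S * W).trace = ((P * W)ᵀ * diagonal lam * (P * W)).trace := by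
          simp only [hSdiag, transpose_mul, Matrix.mul_assoc]
      _ ≤ _ := trace_transpose_mul_diagonal_mul_le_sum_castLE hr hsort hPW
  · set v := fun j : Fin r => w (Fin.castLE hr j)
    have hv : of v * (of v)ᵀ = 1 :=
      of_mul_transpose_eq_one_of_orthonormal fun i j => by
        simpa [v, Fin.castLE_inj] using horth (Fin.castLE hr i) (Fin.castLE hr j)
    change (of v)ᵀᵀ * (of v)ᵀ = 1 ∧ ((of v)ᵀᵀ * S * (of v)ᵀ).trace = _
    rw [transpose_transpose, hv, Matrix.mul_assoc,
      mul_transpose_of_eq_transpose_of_mul_diagonal fun j => heig _, ← Matrix.mul_assoc, hv,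
      Matrix.one_mul, trace_diagonal]
    exact ⟨rfl, rfl⟩

/-- PCA optimality: the top-`r` eigenvectors of a symmetric PSD matrix `S`
maximize `tr (Wᵀ S W)` over matrices with orthonormal columns, with maximum
`λ₁ + ⋯ + λ_r`. -/
theorem pca_trace_maximization {n r : ℕ} (hr : r ≤ n)
    (S : Matrix (Fin n) (Fin n) ℝ) (hS : S.PosSemidef)
    (lam : Fin n → ℝ) (hsort : Antitone lam)
    (w : Fin n → (Fin n → ℝ))
    (heig : ∀ i, S.mulVec (w i) = lam i • w i)
    (horth : ∀ i j, dotProduct (w i) (w j) = if i = j then (1 : ℝ) else 0) :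
    (∀ W : Matrix (Fin n) (Fin r) ℝ, Wᵀ * W = 1 →
        (Wᵀ * S * W).trace ≤ ∑ i : Fin r, lam (Fin.castLE hr i)) ∧
    (let W₀ : Matrix (Fin n) (Fin r) ℝ := fun i j => w (Fin.castLE hr j) i
     W₀ᵀ * W₀ = 1 ∧ (W₀ᵀ * S * W₀).trace = ∑ i : Fin r, lam (Fin.castLE hr i)) :=
  pca_trace_maximization_general hr S lam hsort w heig horth
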